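/- Let F be a field, A ∈ F^{n×n}, B ∈ F^{n×m}, C ∈ F^{m×n}, and assume: (controllability) the n×nm matrix [B, AB, A^2B, …, A^{n−1}B] has rank n; (observability) the nm×n matrix obtained by stacking C, CA, CA^2, …, CA^{n−1} has rank n; and the rational matrix G_sp(λ) := C(λI_n − A)^{−1}B ∈ F(λ)^{m×m} is symmetric, i.e., G_sp(λ)^T = G_sp(λ) over F(λ). Then there exists a unique nonsingular matrix S ∈ F^{n×n} satisfying A^T = S^{−1}AS, C^T = S^{−1}B and B^T = CS, and moreover this S is symmetric (S^T = S). -/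

import Mathlib

/-!
A symmetric transfer function has symmetric Markov parameters `C Aᵏ B`: writing
`(λ - A)⁻¹ = adj (λ - A) / χ_A`, the coefficient matrices of `adj (λ - A)` span every power of `A`.
Hence the block Hankel matrices `𝒪 𝒞` and `𝒪 A 𝒞` are symmetric. If `R` is a right inverse of the
controllability matrix `𝒞`, then `T := 𝒪ᵀ R` satisfies `T 𝒞 = 𝒪ᵀ`, and cancelling `𝒞` and `𝒞ᵀ`
in the two Hankel identities shows that `T` is symmetric and that `Aᵀ T = T A`; the full rank of
`𝒪` makes `T` invertible, and `S := T⁻¹`. Conversely every admissible `S` satisfies `S⁻¹ 𝒞 = 𝒪ᵀ`,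
which determines `S⁻¹` because `𝒞` has a right inverse.
-/

open Matrix

/-- The matrix `(λ I_n − A)⁻¹` over the field of rational functions. -/
noncomputable def lamResolvent {F : Type*} [Field F] {n : ℕ} (A : Matrix (Fin n) (Fin n) F) :
    Matrix (Fin n) (Fin n) (RatFunc F) :=
  (Matrix.diagonal (fun _ => (RatFunc.X : RatFunc F)) - A.map (algebraMap F (RatFunc F)))⁻¹

/-- The controllability matrix `[B, AB, A²B, …, A^{n−1}B]`. -/
def ctrbMat {F : Type*} [Field F] {n m : ℕ} (A : Matrix (Fin n) (Fin n) F)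
    (B : Matrix (Fin n) (Fin m) F) : Matrix (Fin n) (Fin n × Fin m) F :=
  Matrix.of fun r p => (A ^ (p.1 : ℕ) * B) r p.2

/-- The observability matrix obtained by stacking `C, CA, CA², …, CA^{n−1}`. -/
def obsvMat {F : Type*} [Field F] {n m : ℕ} (A : Matrix (Fin n) (Fin n) F)
    (C : Matrix (Fin m) (Fin n) F) : Matrix (Fin n × Fin m) (Fin n) F :=
  Matrix.of fun p c => (C * A ^ (p.1 : ℕ)) p.2 c

open Polynomial

namespace Matrix

theorem exists_mul_eq_one_of_rank_eq_card {K : Type*} [Field K] {ι κ : Type*} [Fintype ι]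
    [Fintype κ] [DecidableEq ι] (M : Matrix ι κ K) (h : M.rank = Fintype.card ι) :
    ∃ R : Matrix κ ι K, M * R = 1 := by
  classical
  have hsurj : LinearMap.range M.mulVecLin = ⊤ := by
    apply Submodule.eq_top_of_finrank_eq
    rw [← Matrix.rank, h, Module.finrank_fintype_fun_eq_card]
  obtain ⟨g, hg⟩ := M.mulVecLin.exists_rightInverse_of_surjective hsurj
  refine ⟨LinearMap.toMatrix' g, Matrix.toLin'.injective ?_⟩
  rw [Matrix.toLin'_mul, Matrix.toLin'_toMatrix', Matrix.toLin'_one]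
  exact hg

section RightInvertible

variable {K : Type*} {ι κ μ : Type*} [Fintype ι] [Fintype κ] [DecidableEq ι]

section Semiring

variable [Semiring K]

theorem mul_right_cancel_of_mul_eq_one {M : Matrix ι κ K} {R : Matrix κ ι K} (hR : M * R = 1)
    {X Y : Matrix μ ι K} (h : X * M = Y * M) : X = Y := by
  simpa [Matrix.mul_assoc, hR] using congrArg (· * R) h

theorem mul_left_cancel_of_mul_eq_one {M : Matrix κ ι K} {L : Matrix ι κ K} (hL : L * M = 1)
    {X Y : Matrix ι μ K} (h : M * X = M * Y) : X = Y := by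
  simpa [← Matrix.mul_assoc, hL] using congrArg (L * ·) h

end Semiring

variable [CommRing K]

variable {X : Matrix ι κ K} {R : Matrix κ ι K} {O : Matrix κ ι K}

theorem exists_mul_eq_transpose_of_hankel_symm (hR : X * R = 1) (hH : (O * X)ᵀ = O * X) :
    ∃ T : Matrix ι ι K, T * X = Oᵀ ∧ Tᵀ = T := by
  have hRT : Rᵀ * Xᵀ = 1 := by rw [← transpose_mul, hR, transpose_one]
  have hT : Oᵀ * R * X = Oᵀ := by
    refine mul_left_cancel_of_mul_eq_one hRT ?_
    calc Xᵀ * (Oᵀ * R * X) = O * X * (R * X) := by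
          rw [← hH, transpose_mul]; simp only [Matrix.mul_assoc]
      _ = Xᵀ * Oᵀ := by
          rw [← Matrix.mul_assoc, Matrix.mul_assoc O, hR, Matrix.mul_one, ← transpose_mul, hH]
  refine ⟨Oᵀ * R, hT, mul_right_cancel_of_mul_eq_one hR (mul_left_cancel_of_mul_eq_one hRT ?_)⟩
  calc Xᵀ * ((Oᵀ * R)ᵀ * X) = (Oᵀ * R * X)ᵀ * X := by
        rw [transpose_mul (Oᵀ * R), Matrix.mul_assoc]
    _ = Xᵀ * (Oᵀ * R * X) := by rw [hT, transpose_transpose, ← transpose_mul, hH]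

theorem transpose_mul_eq_mul_of_hankel_symm (hR : X * R = 1) {T A : Matrix ι ι K}
    (hT : T * X = Oᵀ) (hTsymm : Tᵀ = T) (hH : (O * A * X)ᵀ = O * A * X) : Aᵀ * T = T * A := by
  have hRT : Rᵀ * Xᵀ = 1 := by rw [← transpose_mul, hR, transpose_one]
  have hO : O = Xᵀ * T := by rw [← transpose_transpose O, ← hT, transpose_mul, hTsymm]
  refine mul_right_cancel_of_mul_eq_one hR (mul_left_cancel_of_mul_eq_one hRT ?_)
  calc Xᵀ * (Aᵀ * T * X) = (O * A * X)ᵀ := by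
        rw [Matrix.mul_assoc, hT]; simp only [transpose_mul, Matrix.mul_assoc]
    _ = Xᵀ * (T * A * X) := by rw [hH, hO]; simp only [Matrix.mul_assoc]

end RightInvertible

section Adjugate

variable {R : Type*} [CommRing R] {ι : Type*} [Fintype ι] [DecidableEq ι]

theorem X_sub_C_mul_matPolyEquiv_adjugate_charmatrix (A : Matrix ι ι R) :
    (X - C A) * matPolyEquiv (charmatrix A).adjugate =
      A.charpoly.map (algebraMap R (Matrix ι ι R)) := by
  rw [← matPolyEquiv_charmatrix, ← map_mul, mul_adjugate, ← matPolyEquiv_smul_one]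
  rfl

theorem leadingCoeff_matPolyEquiv_adjugate_charmatrix (A : Matrix ι ι R) :
    (matPolyEquiv (charmatrix A).adjugate).leadingCoeff = 1 := by
  rw [← leadingCoeff_monic_mul (monic_X_sub_C A), X_sub_C_mul_matPolyEquiv_adjugate_charmatrix]
  exact ((charpoly_monic A).map _).leadingCoeff

/- The span contains the leading coefficient `1` and is stable under `A * ·`: the coefficients of
`(X - A) * Q = χ_A` read `A * Q k = Q (k - 1) - χ_A.coeff k • 1`, with `Q (-1) = 0`. -/
theorem pow_mem_span_coeff_matPolyEquiv_adjugate_charmatrix (A : Matrix ι ι R) (t : ℕ) :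
    A ^ t ∈ Submodule.span R (Set.range (matPolyEquiv (charmatrix A).adjugate).coeff) := by
  set Q := matPolyEquiv (charmatrix A).adjugate
  set V := Submodule.span R (Set.range Q.coeff)
  have one_mem : (1 : Matrix ι ι R) ∈ V :=
    leadingCoeff_matPolyEquiv_adjugate_charmatrix A ▸ Submodule.subset_span ⟨_, rfl⟩
  have mul_coeff_mem (k : ℕ) : A * Q.coeff k ∈ V := by
    have hk := congrArg (coeff · k) (X_sub_C_mul_matPolyEquiv_adjugate_charmatrix A)
    simp only [sub_mul, coeff_sub, coeff_C_mul, coeff_map, Algebra.algebraMap_eq_smul_one] at hk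
    rw [← sub_eq_iff_eq_add'.2 (sub_eq_iff_eq_add.1 hk)]
    refine V.sub_mem ?_ (V.smul_mem _ one_mem)
    cases k with
    | zero => rw [coeff_X_mul_zero]; exact V.zero_mem
    | succ k => rw [coeff_X_mul]; exact Submodule.subset_span ⟨k, rfl⟩
  have mul_mem : V ≤ V.comap (LinearMap.mulLeft R A) :=
    Submodule.span_le.2 (Set.range_subset_iff.2 mul_coeff_mem)
  induction t with
  | zero => rwa [pow_zero]
  | succ t ih => rw [pow_succ']; exact mul_mem ih

end Adjugate

end Matrix

section TransferFunction

variable {F : Type*} [Field F] {n m : ℕ}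

theorem lamResolvent_eq (A : Matrix (Fin n) (Fin n) F) :
    lamResolvent A = (algebraMap F[X] (RatFunc F) A.charpoly)⁻¹ •
      (charmatrix A).adjugate.map (algebraMap F[X] (RatFunc F)) := by
  have hchar : diagonal (fun _ => (RatFunc.X : RatFunc F)) - A.map (algebraMap F (RatFunc F)) =
      (charmatrix A).map (algebraMap F[X] (RatFunc F)) := by
    ext i j
    by_cases h : i = j <;> simp [h, RatFunc.algebraMap_X]
  have hdet : ((charmatrix A).map (algebraMap F[X] (RatFunc F))).det =
      algebraMap F[X] (RatFunc F) A.charpoly :=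
    (RingHom.map_det _ _).symm
  rw [lamResolvent, hchar, inv_def, hdet, Ring.inverse_eq_inv]
  exact congrArg _ (RingHom.map_adjugate _ _).symm

variable {A : Matrix (Fin n) (Fin n) F} {B : Matrix (Fin n) (Fin m) F}
  {C : Matrix (Fin m) (Fin n) F}

theorem transpose_mul_coeff_adjugate_mul_of_transfer_symm
    (hsym : (C.map (algebraMap F (RatFunc F)) * lamResolvent A *
        B.map (algebraMap F (RatFunc F)))ᵀ
      = C.map (algebraMap F (RatFunc F)) * lamResolvent A *
        B.map (algebraMap F (RatFunc F))) (k : ℕ) :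
    (C * (matPolyEquiv (charmatrix A).adjugate).coeff k * B)ᵀ =
      C * (matPolyEquiv (charmatrix A).adjugate).coeff k * B := by
  set φ := algebraMap F[X] (RatFunc F)
  set P := C.map Polynomial.C * (charmatrix A).adjugate * B.map Polynomial.C
  have hχ : φ A.charpoly ≠ 0 :=
    (map_ne_zero_iff _ (RatFunc.algebraMap_injective F)).2 (charpoly_monic A).ne_zero
  have hG : C.map (algebraMap F (RatFunc F)) * lamResolvent A * B.map (algebraMap F (RatFunc F)) =
      (φ A.charpoly)⁻¹ • P.map φ := by
    rw [lamResolvent_eq, Matrix.map_mul, Matrix.map_mul, Matrix.map_map, Matrix.map_map,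
      Matrix.mul_smul, Matrix.smul_mul]
    rfl
  have hP : Pᵀ = P := by
    rw [hG, transpose_smul, smul_right_inj (inv_ne_zero hχ), ← transpose_map] at hsym
    exact Matrix.map_injective (RatFunc.algebraMap_injective F) hsym
  ext p q
  have hpq := congrArg (coeff · k) (congrFun (congrFun hP p) q)
  simpa [P, Matrix.mul_apply, finsetSum_coeff, coeff_C_mul, coeff_mul_C] using hpq

theorem transpose_mul_pow_mul_of_transfer_symm
    (hsym : (C.map (algebraMap F (RatFunc F)) * lamResolvent A *
        B.map (algebraMap F (RatFunc F)))ᵀ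
      = C.map (algebraMap F (RatFunc F)) * lamResolvent A *
        B.map (algebraMap F (RatFunc F))) (k : ℕ) :
    (C * A ^ k * B)ᵀ = C * A ^ k * B := by
  have hk := pow_mem_span_coeff_matPolyEquiv_adjugate_charmatrix A k
  generalize A ^ k = M at hk ⊢
  induction hk using Submodule.span_induction with
  | mem _ h =>
    obtain ⟨j, rfl⟩ := h
    exact transpose_mul_coeff_adjugate_mul_of_transfer_symm hsym j
  | zero => simp
  | add _ _ _ _ hx hy => simp only [Matrix.mul_add, Matrix.add_mul, transpose_add, hx, hy]
  | smul a _ _ hx => simp only [Matrix.mul_smul, Matrix.smul_mul, transpose_smul, hx]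

end TransferFunction

section ControllabilityObservability

variable {F : Type*} [Field F] {n m : ℕ}

theorem transpose_obsvMat (A : Matrix (Fin n) (Fin n) F) (C : Matrix (Fin m) (Fin n) F) :
    (obsvMat A C)ᵀ = ctrbMat Aᵀ Cᵀ := by
  ext r p
  simp [obsvMat, ctrbMat, ← transpose_pow, ← transpose_mul]

theorem mul_ctrbMat_of_semiconjBy {A A' T : Matrix (Fin n) (Fin n) F}
    {B B' : Matrix (Fin n) (Fin m) F} (hA : SemiconjBy T A A') (hB : T * B = B') :
    T * ctrbMat A B = ctrbMat A' B' := by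
  ext r ⟨k, q⟩
  have hk : T * (A ^ (k : ℕ) * B) = A' ^ (k : ℕ) * B' := by
    rw [← Matrix.mul_assoc, (hA.pow_right k).eq, Matrix.mul_assoc, hB]
  exact congrFun (congrFun hk r) q

theorem eq_of_ctrbMat_eq {A A' : Matrix (Fin n) (Fin n) F} {B B' : Matrix (Fin n) (Fin m) F}
    (h : ctrbMat A B = ctrbMat A' B') : B = B' := by
  ext r q
  simpa [ctrbMat] using congrFun (congrFun h r) (⟨0, r.pos⟩, q)

theorem obsvMat_mul_mul_ctrbMat_apply (A M : Matrix (Fin n) (Fin n) F)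
    (B : Matrix (Fin n) (Fin m) F) (C : Matrix (Fin m) (Fin n) F) (i j : Fin n) (p q : Fin m) :
    (obsvMat A C * M * ctrbMat A B) (i, p) (j, q) =
      (C * A ^ (i : ℕ) * M * A ^ (j : ℕ) * B) p q := by
  rw [Matrix.mul_assoc _ (A ^ _)]
  rfl

theorem transpose_obsvMat_mul_pow_mul_ctrbMat {A : Matrix (Fin n) (Fin n) F}
    {B : Matrix (Fin n) (Fin m) F} {C : Matrix (Fin m) (Fin n) F}
    (hmarkov : ∀ k : ℕ, (C * A ^ k * B)ᵀ = C * A ^ k * B) (l : ℕ) :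
    (obsvMat A C * A ^ l * ctrbMat A B)ᵀ = obsvMat A C * A ^ l * ctrbMat A B := by
  have hpow (i j : ℕ) : C * A ^ i * A ^ l * A ^ j * B = C * A ^ (i + l + j) * B := by
    simp only [pow_add, Matrix.mul_assoc]
  ext ⟨i, p⟩ ⟨j, q⟩
  rw [transpose_apply, obsvMat_mul_mul_ctrbMat_apply, obsvMat_mul_mul_ctrbMat_apply, hpow, hpow,
    ← hmarkov, transpose_apply, show (j : ℕ) + l + i = i + l + j by ring]

end ControllabilityObservability

/-- If `(A,B,C)` is a controllable and observable (i.e. minimal)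
realization of the symmetric strictly proper rational matrix `G_sp(λ) = C(λI_n−A)⁻¹B`,
then there exists a unique nonsingular `S` with `Aᵀ = S⁻¹AS`, `Cᵀ = S⁻¹B` and `Bᵀ = CS`,
and this `S` is symmetric. -/
theorem exists_unique_symmetric_similarity
    {F : Type*} [Field F] {n m : ℕ}
    (A : Matrix (Fin n) (Fin n) F) (B : Matrix (Fin n) (Fin m) F)
    (C : Matrix (Fin m) (Fin n) F)
    (hctrb : (ctrbMat A B).rank = n)
    (hobsv : (obsvMat A C).rank = n)
    (hsym : (C.map (algebraMap F (RatFunc F)) * lamResolvent A *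
        B.map (algebraMap F (RatFunc F)))ᵀ
      = C.map (algebraMap F (RatFunc F)) * lamResolvent A *
        B.map (algebraMap F (RatFunc F))) :
    ∃ S : Matrix (Fin n) (Fin n) F,
      (IsUnit S.det ∧ Aᵀ = S⁻¹ * A * S ∧ Cᵀ = S⁻¹ * B ∧ Bᵀ = C * S ∧ Sᵀ = S) ∧
      ∀ S' : Matrix (Fin n) (Fin n) F,
        (IsUnit S'.det ∧ Aᵀ = S'⁻¹ * A * S' ∧ Cᵀ = S'⁻¹ * B ∧ Bᵀ = C * S') → S' = S := by
  have hmarkov := transpose_mul_pow_mul_of_transfer_symm hsym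
  obtain ⟨R, hR⟩ := exists_mul_eq_one_of_rank_eq_card (ctrbMat A B) (by rw [hctrb, Fintype.card_fin])
  obtain ⟨L, hL⟩ := exists_mul_eq_one_of_rank_eq_card (obsvMat A C)ᵀ
    (by rw [rank_transpose, hobsv, Fintype.card_fin])
  obtain ⟨T, hT, hTsymm⟩ := exists_mul_eq_transpose_of_hankel_symm hR
    (by simpa using transpose_obsvMat_mul_pow_mul_ctrbMat hmarkov 0)
  have hTA : Aᵀ * T = T * A := transpose_mul_eq_mul_of_hankel_symm hR hT hTsymm
    (by simpa using transpose_obsvMat_mul_pow_mul_ctrbMat hmarkov 1)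
  have hTB : T * B = Cᵀ := eq_of_ctrbMat_eq <|
    (mul_ctrbMat_of_semiconjBy hTA.symm rfl).symm.trans (hT.trans (transpose_obsvMat A C))
  have hdet : IsUnit T.det :=
    isUnit_det_of_right_inverse (B := ctrbMat A B * L) (by rw [← Matrix.mul_assoc, hT, hL])
  refine ⟨T⁻¹, ⟨isUnit_nonsing_inv_det T hdet, ?_, ?_, ?_, ?_⟩, ?_⟩
  · rw [nonsing_inv_nonsing_inv T hdet, ← hTA, Matrix.mul_assoc, mul_nonsing_inv T hdet,
      Matrix.mul_one]
  · rw [nonsing_inv_nonsing_inv T hdet, hTB]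
  · rw [← transpose_transpose C, ← hTB, transpose_mul, hTsymm, Matrix.mul_assoc,
      mul_nonsing_inv T hdet, Matrix.mul_one]
  · rw [transpose_nonsing_inv, hTsymm]
  · rintro S ⟨hS, hSA, hSC, -⟩
    have hSA' : SemiconjBy S⁻¹ A Aᵀ := by
      rw [SemiconjBy, hSA, Matrix.mul_assoc, mul_nonsing_inv S hS, Matrix.mul_one]
    have hST : S⁻¹ = T := mul_right_cancel_of_mul_eq_one hR <| by
      rw [hT, transpose_obsvMat]
      exact mul_ctrbMat_of_semiconjBy hSA' hSC.symm
    rw [← hST, nonsing_inv_nonsing_inv S hS]
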